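/- arXiv:0705.0931 — 4 statements merged into one kernel-verified Lean document; each statement's English description precedes it below -/
import Mathlib

section
/- The difference between the Sarovar–Milburn bound and the SLD quantum information equals C_Υ(θ) − H(θ) = 8 · Σ_{j,k : p_j>0, p_k>0} [p_j p_k / (p_j + p_k)] · |⟨w_j'|w_k⟩|², where H(θ) = Σ_{k : p_k>0} (p_k')²/p_k + Σ_{j<k : p_j+p_k>0} 4 (p_j − p_k)²/(p_j + p_k) |⟨w_j'|w_k⟩|² and C_Υ(θ) = Σ_{k : p_k>0} (p_k')²/p_k + Σ_{j<k : p_j+p_k>0} 4 (p_j + p_k) |⟨w_j'|w_k⟩|² + 4 Σ_{k : p_k>0} p_k |⟨w_k'|w_k⟩|². -/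
open scoped InnerProductSpace

/- Differentiating `⟪w_j, w_k⟫ = δ_jk` gives `⟪w_j', w_k⟫ = -conj ⟪w_k', w_j⟫`, so
`m j k = |⟪w_j', w_k⟫|²` is symmetric. With `g j k = p_j p_k / (p_j + p_k) m j k`, the identities
`(p_j + p_k) - (p_j - p_k)² / (p_j + p_k) = 4 p_j p_k / (p_j + p_k)` and `p_k = 2 p_k² / (p_k + p_k)`
turn `C_Υ - H` into `16 Σ_{j<k} g j k + 8 Σ_k g k k`, which is `8 Σ_{j,k} g j k` because `g` is
symmetric. Since `p ≥ 0`, every positivity guard can be dropped: where it fails, the guarded term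
vanishes (through `x / 0 = 0` when `p_j = p_k = 0`). -/

theorem Finset.sum_sum_eq_two_smul_sum_sum_lt_add_sum_diag {ι M : Type*} [Fintype ι]
    [LinearOrder ι] [AddCommMonoid M] (g : ι → ι → M) (hg : ∀ i j, g i j = g j i) :
    ∑ i, ∑ j, g i j = 2 • ∑ i, ∑ j, (if i < j then g i j else 0) + ∑ i, g i i := by
  have hsplit : ∀ i j, g i j =
      (if i < j then g i j else 0) + (if j < i then g i j else 0) + (if i = j then g i j else 0) := by
    intro i j
    rcases lt_trichotomy i j with h | rfl | h
    · simp [h, h.ne, h.not_gt]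
    · simp
    · simp [h, h.ne', h.not_gt]
  have hlower : ∑ i, ∑ j, (if j < i then g i j else 0) = ∑ i, ∑ j, (if i < j then g i j else 0) := by
    rw [Finset.sum_comm]
    simp_rw [hg]
  calc ∑ i, ∑ j, g i j
      = ∑ i, ∑ j, (if i < j then g i j else 0) + ∑ i, ∑ j, (if j < i then g i j else 0)
          + ∑ i, ∑ j, (if i = j then g i j else 0) := by
        simp only [← Finset.sum_add_distrib, ← hsplit]
    _ = 2 • ∑ i, ∑ j, (if i < j then g i j else 0) + ∑ i, g i i := by
        rw [hlower, two_nsmul]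
        simp

theorem norm_inner_deriv_comm_of_inner_const {𝕜 E : Type*} [RCLike 𝕜] [NormedAddCommGroup E]
    [InnerProductSpace 𝕜 E] [NormedSpace ℝ E] {u v : ℝ → E} {θ : ℝ} {c : 𝕜}
    (hu : DifferentiableAt ℝ u θ) (hv : DifferentiableAt ℝ v θ) (huv : ∀ t, ⟪u t, v t⟫_𝕜 = c) :
    ‖⟪deriv u θ, v θ⟫_𝕜‖ = ‖⟪deriv v θ, u θ⟫_𝕜‖ := by
  have hderiv := hu.hasDerivAt.inner 𝕜 hv.hasDerivAt
  simp only [huv] at hderiv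
  have hsum : ⟪u θ, deriv v θ⟫_𝕜 + ⟪deriv u θ, v θ⟫_𝕜 = 0 := hderiv.unique (hasDerivAt_const θ c)
  rw [eq_neg_of_add_eq_zero_right hsum, norm_neg, ← inner_conj_symm, RCLike.norm_conj]

theorem sum_ite_pair_sub_sum_ite_pair_add_sum_ite_diag {ι : Type*} [Fintype ι] [LinearOrder ι]
    (a : ι → ℝ) (m : ι → ι → ℝ) (ha : ∀ j, 0 ≤ a j) (hm : ∀ j k, m j k = m k j) :
    (∑ j, ∑ k, if j < k ∧ 0 < a j + a k then 4 * (a j + a k) * m j k else 0)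
        - (∑ j, ∑ k, if j < k ∧ 0 < a j + a k then 4 * (a j - a k) ^ 2 / (a j + a k) * m j k else 0)
        + 4 * ∑ k, (if 0 < a k then a k * m k k else 0)
      = 8 * ∑ j, ∑ k, if 0 < a j ∧ 0 < a k then a j * a k / (a j + a k) * m j k else 0 := by
  set g : ι → ι → ℝ := fun j k => a j * a k / (a j + a k) * m j k with hg_def
  have hg : ∀ j k, g j k = g k j := fun j k => by
    simp only [hg_def, hm j k, add_comm (a j), mul_comm (a j)]
  have hoff : ∀ j k, (if j < k ∧ 0 < a j + a k then 4 * (a j + a k) * m j k else 0)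
      - (if j < k ∧ 0 < a j + a k then 4 * (a j - a k) ^ 2 / (a j + a k) * m j k else 0)
      = 16 * if j < k then g j k else 0 := by
    intro j k
    rcases lt_or_ge j k with hjk | hkj
    · rcases (add_nonneg (ha j) (ha k)).lt_or_eq with hpos | hzero
      · simp only [hjk, hpos, and_self, if_true, hg_def]
        field_simp
        ring
      · simp [hjk, hg_def, ← hzero]
    · simp [hkj.not_gt]
  have hdiag : ∀ k, (if 0 < a k then a k * m k k else 0) = 2 * g k k := by
    intro k
    rcases (ha k).lt_or_eq with hpos | hzero
    · simp only [hpos, if_true, hg_def]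
      field_simp
      ring
    · simp [hg_def, ← hzero]
  have hpair : ∀ j k, (if 0 < a j ∧ 0 < a k then a j * a k / (a j + a k) * m j k else 0) = g j k := by
    intro j k
    split_ifs with hpos
    · rfl
    · have hprod : a j * a k = 0 := by
        rcases not_and_or.mp hpos with h | h
        · rw [le_antisymm (not_lt.mp h) (ha j), zero_mul]
        · rw [le_antisymm (not_lt.mp h) (ha k), mul_zero]
      simp [hg_def, hprod]
  simp only [← Finset.sum_sub_distrib, hoff, hdiag, hpair, ← Finset.mul_sum,
    Finset.sum_sum_eq_two_smul_sum_sum_lt_add_sum_diag g hg, nsmul_eq_mul]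
  ring

theorem stmt3_general {d n : ℕ} (p : Fin n → ℝ → ℝ) (w : Fin n → ℝ → EuclideanSpace ℂ (Fin d))
    (hwdiff : ∀ j, Differentiable ℝ (w j))
    (hpnonneg : ∀ j θ, 0 ≤ p j θ)
    (horth : ∀ θ : ℝ, ∀ j k : Fin n,
      ⟪w j θ, w k θ⟫_ℂ = if j = k then 1 else 0) :
    ∀ θ : ℝ,
      (((∑ k, if 0 < p k θ then (deriv (p k) θ) ^ 2 / p k θ else 0)
          + ∑ j, ∑ k, if j < k ∧ 0 < p j θ + p k θ then
              4 * (p j θ + p k θ) * ‖⟪deriv (w j) θ, w k θ⟫_ℂ‖ ^ 2 else 0)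
          + 4 * ∑ k, if 0 < p k θ then
              p k θ * ‖⟪deriv (w k) θ, w k θ⟫_ℂ‖ ^ 2 else 0)
        - ((∑ k, if 0 < p k θ then (deriv (p k) θ) ^ 2 / p k θ else 0)
          + ∑ j, ∑ k, if j < k ∧ 0 < p j θ + p k θ then
              4 * (p j θ - p k θ) ^ 2 / (p j θ + p k θ)
                * ‖⟪deriv (w j) θ, w k θ⟫_ℂ‖ ^ 2 else 0)
      = 8 * ∑ j, ∑ k, if 0 < p j θ ∧ 0 < p k θ then
          p j θ * p k θ / (p j θ + p k θ)
            * ‖⟪deriv (w j) θ, w k θ⟫_ℂ‖ ^ 2 else 0 := by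
  intro θ
  have hsymm : ∀ j k, ‖⟪deriv (w j) θ, w k θ⟫_ℂ‖ ^ 2 = ‖⟪deriv (w k) θ, w j θ⟫_ℂ‖ ^ 2 := fun j k => by
    rw [norm_inner_deriv_comm_of_inner_const (hwdiff j θ) (hwdiff k θ) (horth · j k)]
  have hgap := sum_ite_pair_sub_sum_ite_pair_add_sum_ite_diag (p · θ)
    (fun j k => ‖⟪deriv (w j) θ, w k θ⟫_ℂ‖ ^ 2) (hpnonneg · θ) hsymm
  linear_combination hgap

/-- `C_Υ(θ) − H(θ) = 8 Σ_{j,k : p_j>0, p_k>0} p_j p_k/(p_j+p_k) |⟨w_j'|w_k⟩|²`. -/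
theorem stmt3 {d n : ℕ} (p : Fin n → ℝ → ℝ) (w : Fin n → ℝ → EuclideanSpace ℂ (Fin d))
    (hpdiff : ∀ j, Differentiable ℝ (p j))
    (hwdiff : ∀ j, Differentiable ℝ (w j))
    (hpnonneg : ∀ j θ, 0 ≤ p j θ)
    (hpsum : ∀ θ : ℝ, ∑ j, p j θ = 1)
    (horth : ∀ θ : ℝ, ∀ j k : Fin n,
      ⟪w j θ, w k θ⟫_ℂ = if j = k then 1 else 0) :
    ∀ θ : ℝ,
      (((∑ k, if 0 < p k θ then (deriv (p k) θ) ^ 2 / p k θ else 0)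
          + ∑ j, ∑ k, if j < k ∧ 0 < p j θ + p k θ then
              4 * (p j θ + p k θ) * ‖⟪deriv (w j) θ, w k θ⟫_ℂ‖ ^ 2 else 0)
          + 4 * ∑ k, if 0 < p k θ then
              p k θ * ‖⟪deriv (w k) θ, w k θ⟫_ℂ‖ ^ 2 else 0)
        - ((∑ k, if 0 < p k θ then (deriv (p k) θ) ^ 2 / p k θ else 0)
          + ∑ j, ∑ k, if j < k ∧ 0 < p j θ + p k θ then
              4 * (p j θ - p k θ) ^ 2 / (p j θ + p k θ)
                * ‖⟪deriv (w j) θ, w k θ⟫_ℂ‖ ^ 2 else 0)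
      = 8 * ∑ j, ∑ k, if 0 < p j θ ∧ 0 < p k θ then
          p j θ * p k θ / (p j θ + p k θ)
            * ‖⟪deriv (w j) θ, w k θ⟫_ℂ‖ ^ 2 else 0 :=
  stmt3_general p w hwdiff hpnonneg horth
end

section
/- H(θ) ≤ C_Υ(θ): the SLD quantum information, expressed in eigendecomposition form, is bounded above by the Sarovar–Milburn bound. -/
open scoped InnerProductSpace

theorem sq_sub_div_add_le_add {a b : ℝ} (ha : 0 ≤ a) (hb : 0 ≤ b) :
    (a - b) ^ 2 / (a + b) ≤ a + b := by
  rcases (add_nonneg ha hb).eq_or_lt with hab | hab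
  · simp [← hab]
  · rw [div_le_iff₀ hab]
    nlinarith [mul_nonneg ha hb]

theorem stmt4_general {d n : ℕ} (p : Fin n → ℝ → ℝ) (w : Fin n → ℝ → EuclideanSpace ℂ (Fin d))
    (hpnonneg : ∀ j θ, 0 ≤ p j θ) :
    ∀ θ : ℝ,
      ((∑ k, if 0 < p k θ then (deriv (p k) θ) ^ 2 / p k θ else 0)
        + ∑ j, ∑ k, if j < k ∧ 0 < p j θ + p k θ then
            4 * (p j θ - p k θ) ^ 2 / (p j θ + p k θ)
              * ‖⟪deriv (w j) θ, w k θ⟫_ℂ‖ ^ 2 else 0)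
      ≤ ((∑ k, if 0 < p k θ then (deriv (p k) θ) ^ 2 / p k θ else 0)
          + ∑ j, ∑ k, if j < k ∧ 0 < p j θ + p k θ then
              4 * (p j θ + p k θ) * ‖⟪deriv (w j) θ, w k θ⟫_ℂ‖ ^ 2 else 0)
          + 4 * ∑ k, if 0 < p k θ then
              p k θ * ‖⟪deriv (w k) θ, w k θ⟫_ℂ‖ ^ 2 else 0 := by
  intro θ
  have hpairs : (∑ j, ∑ k, if j < k ∧ 0 < p j θ + p k θ then
        4 * (p j θ - p k θ) ^ 2 / (p j θ + p k θ)
          * ‖⟪deriv (w j) θ, w k θ⟫_ℂ‖ ^ 2 else 0)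
      ≤ ∑ j, ∑ k, if j < k ∧ 0 < p j θ + p k θ then
          4 * (p j θ + p k θ) * ‖⟪deriv (w j) θ, w k θ⟫_ℂ‖ ^ 2 else 0 := by
    gcongr with j _ k _
    split_ifs
    · rw [mul_div_assoc]
      gcongr
      exact sq_sub_div_add_le_add (hpnonneg j θ) (hpnonneg k θ)
    · rfl
  have hdiag : (0 : ℝ) ≤ 4 * ∑ k, if 0 < p k θ then
      p k θ * ‖⟪deriv (w k) θ, w k θ⟫_ℂ‖ ^ 2 else 0 := by
    refine mul_nonneg zero_le_four (Finset.sum_nonneg fun k _ => ?_)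
    split_ifs with hk
    · exact mul_nonneg hk.le (sq_nonneg _)
    · rfl
  linarith

/-- `H(θ) ≤ C_Υ(θ)`: the SLD quantum information is bounded above by the
Sarovar–Milburn bound. -/
theorem stmt4 {d n : ℕ} (p : Fin n → ℝ → ℝ) (w : Fin n → ℝ → EuclideanSpace ℂ (Fin d))
    (hpdiff : ∀ j, Differentiable ℝ (p j))
    (hwdiff : ∀ j, Differentiable ℝ (w j))
    (hpnonneg : ∀ j θ, 0 ≤ p j θ)
    (hpsum : ∀ θ : ℝ, ∑ j, p j θ = 1)
    (horth : ∀ θ : ℝ, ∀ j k : Fin n,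
      ⟪w j θ, w k θ⟫_ℂ = if j = k then 1 else 0) :
    ∀ θ : ℝ,
      ((∑ k, if 0 < p k θ then (deriv (p k) θ) ^ 2 / p k θ else 0)
        + ∑ j, ∑ k, if j < k ∧ 0 < p j θ + p k θ then
            4 * (p j θ - p k θ) ^ 2 / (p j θ + p k θ)
              * ‖⟪deriv (w j) θ, w k θ⟫_ℂ‖ ^ 2 else 0)
      ≤ ((∑ k, if 0 < p k θ then (deriv (p k) θ) ^ 2 / p k θ else 0)
          + ∑ j, ∑ k, if j < k ∧ 0 < p j θ + p k θ then
              4 * (p j θ + p k θ) * ‖⟪deriv (w j) θ, w k θ⟫_ℂ‖ ^ 2 else 0)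
          + 4 * ∑ k, if 0 < p k θ then
              p k θ * ‖⟪deriv (w k) θ, w k θ⟫_ℂ‖ ^ 2 else 0 :=
  stmt4_general p w hpnonneg
end

section
/- Equality H(θ) = C_Υ(θ) holds if and only if ⟨w_j'(θ)|w_k(θ)⟩ = 0 for all pairs j, k with p_j(θ) > 0 and p_k(θ) > 0. -/
open scoped InnerProductSpace

/-!
Differentiating `⟪w_j, w_k⟫ = δ_jk` gives `⟪w_j', w_k⟫ = -conj ⟪w_k', w_j⟫`, so the coefficients
`|⟪w_j', w_k⟫|²` are symmetric in `j, k`. Since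
`4 (p_j + p_k) - 4 (p_j - p_k)² / (p_j + p_k) = 16 p_j p_k / (p_j + p_k)`,
the difference `C_Υ - H` is a sum of nonnegative terms
`16 p_j p_k / (p_j + p_k) |⟪w_j', w_k⟫|²` (`j < k`) and `4 p_k |⟪w_k', w_k⟫|²`,
and it vanishes exactly when each of them does.
-/

section Derivative

variable {𝕜 E : Type*} [RCLike 𝕜] [NormedAddCommGroup E] [InnerProductSpace 𝕜 E]
  [NormedSpace ℝ E] {u v : ℝ → E} {θ : ℝ} {c : 𝕜}

theorem inner_deriv_add_inner_deriv_eq_zero (hu : DifferentiableAt ℝ u θ)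
    (hv : DifferentiableAt ℝ v θ) (huv : ∀ t, ⟪u t, v t⟫_𝕜 = c) :
    ⟪u θ, deriv v θ⟫_𝕜 + ⟪deriv u θ, v θ⟫_𝕜 = 0 := by
  have hconst : HasDerivAt (fun t => ⟪u t, v t⟫_𝕜) 0 θ := by
    simpa only [huv] using hasDerivAt_const θ c
  exact (hu.hasDerivAt.inner 𝕜 hv.hasDerivAt).unique hconst

theorem norm_inner_deriv_comm (hu : DifferentiableAt ℝ u θ) (hv : DifferentiableAt ℝ v θ)
    (huv : ∀ t, ⟪u t, v t⟫_𝕜 = c) :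
    ‖⟪deriv u θ, v θ⟫_𝕜‖ = ‖⟪deriv v θ, u θ⟫_𝕜‖ := by
  rw [eq_neg_of_add_eq_zero_right (inner_deriv_add_inner_deriv_eq_zero hu hv huv), norm_neg,
    ← inner_conj_symm, RCLike.norm_conj]

end Derivative

section Coefficients

variable {a b c : ℝ}

theorem four_mul_add_sub_four_mul_sq_sub_div_add (hab : a + b ≠ 0) :
    4 * (a + b) - 4 * (a - b) ^ 2 / (a + b) = 16 * a * b / (a + b) := by
  field_simp
  ring

theorem four_mul_sq_sub_div_add_le (ha : 0 ≤ a) (hb : 0 ≤ b) (hab : 0 < a + b) :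
    4 * (a - b) ^ 2 / (a + b) ≤ 4 * (a + b) := by
  have := four_mul_add_sub_four_mul_sq_sub_div_add hab.ne'
  have : 0 ≤ 16 * a * b / (a + b) := by positivity
  linarith

theorem ite_four_mul_sq_sub_div_add_le {P : Prop} [Decidable P] (ha : 0 ≤ a) (hb : 0 ≤ b)
    (hc : 0 ≤ c) :
    (if P ∧ 0 < a + b then 4 * (a - b) ^ 2 / (a + b) * c else 0)
      ≤ if P ∧ 0 < a + b then 4 * (a + b) * c else 0 := by
  split_ifs with h
  · exact mul_le_mul_of_nonneg_right (four_mul_sq_sub_div_add_le ha hb h.2) hc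
  · rfl

theorem ite_four_mul_sq_sub_div_add_eq_iff {P : Prop} [Decidable P] (ha : 0 ≤ a) (hb : 0 ≤ b) :
    ((if P ∧ 0 < a + b then 4 * (a - b) ^ 2 / (a + b) * c else 0)
      = if P ∧ 0 < a + b then 4 * (a + b) * c else 0) ↔ (P → 0 < a → 0 < b → c = 0) := by
  split_ifs with h
  · have hdiff : 4 * (a + b) * c - 4 * (a - b) ^ 2 / (a + b) * c = 16 * a * b / (a + b) * c := by
      rw [← sub_mul, four_mul_add_sub_four_mul_sq_sub_div_add h.2.ne']
    rw [eq_comm, ← sub_eq_zero, hdiff]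
    constructor
    · intro hzero _ hapos hbpos
      have : 0 < 16 * a * b / (a + b) := by positivity
      exact (mul_eq_zero.mp hzero).resolve_left this.ne'
    · intro himp
      rcases ha.eq_or_lt with rfl | hapos
      · simp
      rcases hb.eq_or_lt with rfl | hbpos
      · simp
      rw [himp h.1 hapos hbpos, mul_zero]
  · exact iff_of_true rfl fun hP hapos hbpos => (h ⟨hP, add_pos hapos hbpos⟩).elim

theorem ite_mul_eq_zero_iff : (if 0 < a then a * c else 0) = 0 ↔ (0 < a → c = 0) := by
  split_ifs with h
  · simp [h, h.ne']
  · exact iff_of_true rfl fun h' => absurd h' h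

end Coefficients

theorem Fintype.sum_sum_eq_sum_sum_iff_of_le {ι κ M : Type*} [Fintype ι] [Fintype κ]
    [AddCommMonoid M] [PartialOrder M] [IsOrderedCancelAddMonoid M] {f g : ι → κ → M}
    (h : ∀ i j, f i j ≤ g i j) :
    ∑ i, ∑ j, f i j = ∑ i, ∑ j, g i j ↔ ∀ i j, f i j = g i j := by
  simp only [← Fintype.sum_prod_type', Finset.sum_eq_sum_iff_of_le fun (x : ι × κ) _ => h x.1 x.2,
    Finset.mem_univ, true_implies, Prod.forall]

theorem sum_pair_sum_eq_add_diag_sum_iff {ι : Type*} [Fintype ι] [LinearOrder ι] {a : ι → ℝ}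
    {c : ι → ι → ℝ} (ha : ∀ i, 0 ≤ a i) (hc : ∀ i j, 0 ≤ c i j) :
    ((∑ j, ∑ k, if j < k ∧ 0 < a j + a k then 4 * (a j - a k) ^ 2 / (a j + a k) * c j k else 0)
        = (∑ j, ∑ k, if j < k ∧ 0 < a j + a k then 4 * (a j + a k) * c j k else 0)
          + 4 * ∑ k, if 0 < a k then a k * c k k else 0)
      ↔ ∀ j k, j ≤ k → 0 < a j → 0 < a k → c j k = 0 := by
  have hpair_le (j k : ι) := ite_four_mul_sq_sub_div_add_le (P := j < k) (ha j) (ha k) (hc j k)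
  have hdiag_nonneg (k : ι) : 0 ≤ if 0 < a k then a k * c k k else 0 := by
    split_ifs with h
    · exact mul_nonneg h.le (hc k k)
    · rfl
  have hsum_le := Finset.sum_le_sum fun j (_ : j ∈ Finset.univ) =>
    Finset.sum_le_sum fun k (_ : k ∈ Finset.univ) => hpair_le j k
  have hdiag_sum_nonneg := Finset.sum_nonneg fun k (_ : k ∈ Finset.univ) => hdiag_nonneg k
  have hsplit {X Y Z : ℝ} (hXY : X ≤ Y) (hZ : 0 ≤ Z) : X = Y + 4 * Z ↔ X = Y ∧ Z = 0 :=
    ⟨fun h => ⟨by linarith, by linarith⟩, fun h => by rw [h.1, h.2]; ring⟩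
  rw [hsplit hsum_le hdiag_sum_nonneg,
    Fintype.sum_sum_eq_sum_sum_iff_of_le hpair_le, Fintype.sum_eq_zero_iff_of_nonneg hdiag_nonneg,
    funext_iff]
  simp only [ite_four_mul_sq_sub_div_add_eq_iff (ha _) (ha _), Pi.zero_apply, ite_mul_eq_zero_iff]
  constructor
  · rintro ⟨hpair, hdiag⟩ j k hjk
    rcases hjk.lt_or_eq with hlt | rfl
    exacts [hpair j k hlt, fun hpos _ => hdiag j hpos]
  · intro h
    exact ⟨fun j k hjk => h j k hjk.le, fun k hpos => h k k le_rfl hpos hpos⟩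

theorem stmt5_general {d n : ℕ} (p : Fin n → ℝ → ℝ) (w : Fin n → ℝ → EuclideanSpace ℂ (Fin d))
    (hwdiff : ∀ j, Differentiable ℝ (w j))
    (hpnonneg : ∀ j θ, 0 ≤ p j θ)
    (horth : ∀ θ : ℝ, ∀ j k : Fin n,
      ⟪w j θ, w k θ⟫_ℂ = if j = k then 1 else 0) :
    ∀ θ : ℝ,
      (((∑ k, if 0 < p k θ then (deriv (p k) θ) ^ 2 / p k θ else 0)
          + ∑ j, ∑ k, if j < k ∧ 0 < p j θ + p k θ then
              4 * (p j θ - p k θ) ^ 2 / (p j θ + p k θ)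
                * ‖⟪deriv (w j) θ, w k θ⟫_ℂ‖ ^ 2 else 0)
        = ((∑ k, if 0 < p k θ then (deriv (p k) θ) ^ 2 / p k θ else 0)
            + ∑ j, ∑ k, if j < k ∧ 0 < p j θ + p k θ then
                4 * (p j θ + p k θ) * ‖⟪deriv (w j) θ, w k θ⟫_ℂ‖ ^ 2 else 0)
            + 4 * ∑ k, if 0 < p k θ then
                p k θ * ‖⟪deriv (w k) θ, w k θ⟫_ℂ‖ ^ 2 else 0)
      ↔ (∀ j k : Fin n, 0 < p j θ → 0 < p k θ →
          ⟪deriv (w j) θ, w k θ⟫_ℂ = 0) := by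
  intro θ
  have hsymm (j k : Fin n) : ‖⟪deriv (w j) θ, w k θ⟫_ℂ‖ = ‖⟪deriv (w k) θ, w j θ⟫_ℂ‖ :=
    norm_inner_deriv_comm (hwdiff j θ) (hwdiff k θ) (horth · j k)
  rw [add_assoc, add_right_inj]
  refine (sum_pair_sum_eq_add_diag_sum_iff (a := (p · θ))
    (c := fun j k => ‖⟪deriv (w j) θ, w k θ⟫_ℂ‖ ^ 2) (hpnonneg · θ) fun _ _ => sq_nonneg _).trans ?_
  simp only [sq_eq_zero_iff, norm_eq_zero]
  refine ⟨fun h j k hj hk => ?_, fun h j k _ => h j k⟩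
  rcases le_total j k with hjk | hkj
  · exact h j k hjk hj hk
  · rw [← norm_eq_zero, hsymm, norm_eq_zero]
    exact h k j hkj hk hj

/-- `H(θ) = C_Υ(θ)` iff `⟨w_j'(θ)|w_k(θ)⟩ = 0` for all `j, k` with
`p_j(θ) > 0` and `p_k(θ) > 0`. -/
theorem stmt5 {d n : ℕ} (p : Fin n → ℝ → ℝ) (w : Fin n → ℝ → EuclideanSpace ℂ (Fin d))
    (hpdiff : ∀ j, Differentiable ℝ (p j))
    (hwdiff : ∀ j, Differentiable ℝ (w j))
    (hpnonneg : ∀ j θ, 0 ≤ p j θ)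
    (hpsum : ∀ θ : ℝ, ∑ j, p j θ = 1)
    (horth : ∀ θ : ℝ, ∀ j k : Fin n,
      ⟪w j θ, w k θ⟫_ℂ = if j = k then 1 else 0) :
    ∀ θ : ℝ,
      (((∑ k, if 0 < p k θ then (deriv (p k) θ) ^ 2 / p k θ else 0)
          + ∑ j, ∑ k, if j < k ∧ 0 < p j θ + p k θ then
              4 * (p j θ - p k θ) ^ 2 / (p j θ + p k θ)
                * ‖⟪deriv (w j) θ, w k θ⟫_ℂ‖ ^ 2 else 0)
        = ((∑ k, if 0 < p k θ then (deriv (p k) θ) ^ 2 / p k θ else 0)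
            + ∑ j, ∑ k, if j < k ∧ 0 < p j θ + p k θ then
                4 * (p j θ + p k θ) * ‖⟪deriv (w j) θ, w k θ⟫_ℂ‖ ^ 2 else 0)
            + 4 * ∑ k, if 0 < p k θ then
                p k θ * ‖⟪deriv (w k) θ, w k θ⟫_ℂ‖ ^ 2 else 0)
      ↔ (∀ j k : Fin n, 0 < p j θ → 0 < p k θ →
          ⟪deriv (w j) θ, w k θ⟫_ℂ = 0) :=
  stmt5_general p w hwdiff hpnonneg horth
end

section
/- With Λ the particular SLD solution above, tr{ρΛ²} equals Σ_{k:p_k>0} (p_k')²/p_k + Σ_{j<k:p_j+p_k>0} 4(p_j−p_k)²/(p_j+p_k) |⟨w_j'|w_k⟩|², i.e., the SLD quantum information has the stated eigendecomposition form. -/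
/-!
Let `U` be the matrix whose columns are the orthonormal vectors `w_a`, so that `Uᴴ U = 1`.
Then `ρ = U D Uᴴ` with `D = diag(p)` and `Λ = U M Uᴴ`, where `M` is the matrix of `Λ` in the basis
`w`, Hermitian off the diagonal. Hence `tr(ρΛ²) = tr(D M²) = ∑_{a,b} p_a M_ab M_ba`, and pairing the
entries `(a, b)` and `(b, a)` for `a < b` gives `(p_a + p_b) |M_ab|²`.
-/

open Matrix

lemma Finset.sum_sum_eq_sum_diag_add_sum_lt {ι M : Type*} [Fintype ι] [LinearOrder ι]
    [AddCommMonoid M] (f : ι → ι → M) :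
    ∑ a, ∑ b, f a b = ∑ a, f a a + ∑ a, ∑ b, if a < b then f a b + f b a else 0 := by
  have hsplit : ∀ a b, f a b = (if a = b then f a b else 0)
      + ((if a < b then f a b else 0) + if b < a then f a b else 0) := by
    intro a b
    rcases lt_trichotomy a b with h | rfl | h
    · simp [h, h.ne, h.not_gt]
    · simp
    · simp [h, h.ne', h.not_gt]
  conv_lhs => enter [2, a, 2, b]; rw [hsplit a b]
  simp only [Finset.sum_add_distrib, Finset.sum_ite_eq, Finset.mem_univ, if_true]
  rw [Finset.sum_comm (f := fun a b => if b < a then f a b else 0)]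
  simp only [← Finset.sum_add_distrib, ite_add_ite, add_zero]

namespace Matrix

variable {R ι n : Type*} [CommSemiring R]

lemma trace_diagonal_mul_mul [Fintype ι] [DecidableEq ι] (p : ι → R) (M : Matrix ι ι R) :
    (diagonal p * M * M).trace = ∑ a, ∑ b, p a * (M a b * M b a) := by
  simp only [Matrix.mul_assoc, trace, diag_apply, diagonal_mul, mul_apply (M := M),
    Finset.mul_sum]

variable [StarRing R]

lemma conj_mul_conj_of_conjTranspose_mul_self [Fintype ι] [Fintype n] [DecidableEq ι]
    {U : Matrix n ι R} (hU : Uᴴ * U = 1) (A B : Matrix ι ι R) :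
    U * A * Uᴴ * (U * B * Uᴴ) = U * (A * B) * Uᴴ := by
  simp only [Matrix.mul_assoc, ← Matrix.mul_assoc Uᴴ U, hU, Matrix.one_mul]

lemma trace_conj_of_conjTranspose_mul_self [Fintype ι] [Fintype n] [DecidableEq ι]
    {U : Matrix n ι R} (hU : Uᴴ * U = 1) (A : Matrix ι ι R) : (U * A * Uᴴ).trace = A.trace := by
  rw [trace_mul_cycle, hU, Matrix.one_mul]

lemma transpose_of_conjTranspose_mul_self_eq_one [Fintype n] [DecidableEq ι] {w : ι → n → R}
    (hw : ∀ a b, star (w a) ⬝ᵥ w b = if a = b then 1 else 0) : (of w)ᵀᴴ * (of w)ᵀ = 1 := by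
  ext a b
  simpa [mul_apply, one_apply, dotProduct] using hw a b

lemma transpose_of_mul_mul_conjTranspose [Fintype ι] (w : ι → n → R) (A : Matrix ι ι R) :
    (of w)ᵀ * A * (of w)ᵀᴴ = ∑ a, ∑ b, A a b • vecMulVec (w a) (star (w b)) := by
  ext i j
  simp only [mul_apply, transpose_apply, of_apply, conjTranspose_apply, sum_apply, smul_apply,
    vecMulVec_apply, Finset.sum_mul, Pi.star_apply, smul_eq_mul]
  rw [Finset.sum_comm]
  refine Finset.sum_congr rfl fun a _ => Finset.sum_congr rfl fun b _ => ?_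
  ring

lemma sum_smul_vecMulVec_star [Fintype ι] [DecidableEq ι] (w : ι → n → R) (p : ι → R) :
    ∑ a, p a • vecMulVec (w a) (star (w a)) = (of w)ᵀ * diagonal p * (of w)ᵀᴴ := by
  simp [transpose_of_mul_mul_conjTranspose, diagonal_apply, ite_smul]

end Matrix

section SLD

variable {ι : Type*}

noncomputable def sldUpper (p : ι → ℝ) (c : ι → ι → ℂ) (a b : ι) : ℂ :=
  if 0 < p a + p b then ((2 * (p a - p b) / (p a + p b) : ℝ) : ℂ) * c a b else 0

/- The matrix of `Λ` in the eigenbasis `w` of `ρ`, where `p' = dp/dθ` and `c a b = ⟨w_a'|w_b⟩`.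
Where `p a = 0` the diagonal entry `p' a / p a` is `0`, matching the terms omitted from `Λ`. -/
noncomputable def sldCoeff [LinearOrder ι] (p p' : ι → ℝ) (c : ι → ι → ℂ) : Matrix ι ι ℂ :=
  of fun a b => if a = b then ((p' a / p a : ℝ) : ℂ)
    else if a < b then sldUpper p c a b else star (sldUpper p c b a)

variable (p p' : ι → ℝ) (c : ι → ι → ℂ)

lemma add_mul_norm_sq_sldUpper (a b : ι) :
    (p a + p b) * ‖sldUpper p c a b‖ ^ 2
      = if 0 < p a + p b then 4 * (p a - p b) ^ 2 / (p a + p b) * ‖c a b‖ ^ 2 else 0 := by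
  unfold sldUpper
  split_ifs with h
  · rw [norm_mul, Complex.norm_real, Real.norm_eq_abs, mul_pow, sq_abs]
    field_simp
    ring
  · simp

variable [LinearOrder ι]

lemma sldCoeff_apply_self (a : ι) : sldCoeff p p' c a a = ((p' a / p a : ℝ) : ℂ) := by
  simp [sldCoeff]

lemma sldCoeff_apply_of_lt {a b : ι} (h : a < b) : sldCoeff p p' c a b = sldUpper p c a b := by
  simp [sldCoeff, h, h.ne]

lemma sldCoeff_apply_of_gt {a b : ι} (h : b < a) :
    sldCoeff p p' c a b = star (sldUpper p c b a) := by
  simp [sldCoeff, h.ne', h.not_gt]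

lemma trace_diagonal_mul_sldCoeff_mul_sldCoeff [Fintype ι] (hp : ∀ a, 0 ≤ p a) :
    (diagonal (fun a => (p a : ℂ)) * sldCoeff p p' c * sldCoeff p p' c).trace
      = (((∑ k, if 0 < p k then p' k ^ 2 / p k else 0)
          + ∑ j, ∑ k, if j < k ∧ 0 < p j + p k then
              4 * (p j - p k) ^ 2 / (p j + p k) * ‖c j k‖ ^ 2 else 0 : ℝ) : ℂ) := by
  rw [trace_diagonal_mul_mul, Finset.sum_sum_eq_sum_diag_add_sum_lt, Complex.ofReal_add,
    Complex.ofReal_sum, Complex.ofReal_sum]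
  congr 1
  · refine Finset.sum_congr rfl fun a _ => ?_
    rw [sldCoeff_apply_self, ← Complex.ofReal_mul, ← Complex.ofReal_mul]
    congr 1
    rcases (hp a).lt_or_eq with ha | ha
    · rw [if_pos ha]
      field_simp
    · simp [← ha]
  · refine Finset.sum_congr rfl fun a _ => ?_
    rw [Complex.ofReal_sum]
    refine Finset.sum_congr rfl fun b _ => ?_
    by_cases hab : a < b
    · rw [if_pos hab, sldCoeff_apply_of_lt _ _ _ hab, sldCoeff_apply_of_gt _ _ _ hab]
      have hpair : ∀ u : ℂ, (p a : ℂ) * (u * star u) + (p b : ℂ) * (star u * u)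
          = (((p a + p b) * ‖u‖ ^ 2 : ℝ) : ℂ) := fun u => by
        rw [mul_comm (star u) u, ← add_mul, Complex.star_def, Complex.mul_conj']
        push_cast
        ring
      rw [hpair, add_mul_norm_sq_sldUpper]
      simp only [hab, true_and]
    · simp [hab]

lemma transpose_of_mul_sldCoeff_mul_conjTranspose [Fintype ι] {n : Type*} [Fintype n] (w w' : ι → n → ℂ) :
    (of w)ᵀ * sldCoeff p p' (fun a b => star (w' a) ⬝ᵥ w b) * (of w)ᵀᴴ
      = (∑ k, if p k ≠ 0 then ((p' k / p k : ℝ) : ℂ) • vecMulVec (w k) (star (w k)) else 0)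
        + ∑ j, ∑ k, if j < k ∧ 0 < p j + p k then
            ((2 * (p j - p k) / (p j + p k) : ℝ) : ℂ) •
              ((star (w' j) ⬝ᵥ w k) • vecMulVec (w j) (star (w k))
                + (star (w k) ⬝ᵥ w' j) • vecMulVec (w k) (star (w j)))
          else 0 := by
  rw [transpose_of_mul_mul_conjTranspose, Finset.sum_sum_eq_sum_diag_add_sum_lt]
  congr 1
  · refine Finset.sum_congr rfl fun a _ => ?_
    rw [sldCoeff_apply_self]
    split_ifs with ha
    · rfl
    · simp [not_not.mp ha]
  · refine Finset.sum_congr rfl fun a _ => Finset.sum_congr rfl fun b _ => ?_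
    by_cases hab : a < b
    · rw [if_pos hab, sldCoeff_apply_of_lt _ _ _ hab, sldCoeff_apply_of_gt _ _ _ hab, sldUpper]
      simp only [hab, true_and]
      split_ifs with h
      · rw [star_dotProduct (w b)]
        simp [smul_add, smul_smul]
      · simp
    · simp [hab]

end SLD

theorem stmt10_general {d : ℕ} (p : Fin d → ℝ → ℝ) (w : Fin d → ℝ → Fin d → ℂ)
    (hpnonneg : ∀ j θ, 0 ≤ p j θ)
    (horth : ∀ θ : ℝ, ∀ j k : Fin d,
      star (w j θ) ⬝ᵥ w k θ = if j = k then 1 else 0)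
    (θ : ℝ)
    (Λ : Matrix (Fin d) (Fin d) ℂ)
    (hΛ : Λ = (∑ k, if p k θ ≠ 0 then
            ((deriv (p k) θ / p k θ : ℝ) : ℂ) • vecMulVec (w k θ) (star (w k θ)) else 0)
        + ∑ j, ∑ k, if j < k ∧ 0 < p j θ + p k θ then
            ((2 * (p j θ - p k θ) / (p j θ + p k θ) : ℝ) : ℂ) •
              ((star (deriv (w j) θ) ⬝ᵥ w k θ) • vecMulVec (w j θ) (star (w k θ))
                + (star (w k θ) ⬝ᵥ deriv (w j) θ) • vecMulVec (w k θ) (star (w j θ)))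
          else 0) :
    ((∑ j, ((p j θ : ℂ) • vecMulVec (w j θ) (star (w j θ)))) * Λ * Λ).trace
      = (((∑ k, if 0 < p k θ then (deriv (p k) θ) ^ 2 / p k θ else 0)
          + ∑ j, ∑ k, if j < k ∧ 0 < p j θ + p k θ then
              4 * (p j θ - p k θ) ^ 2 / (p j θ + p k θ)
                * ‖star (deriv (w j) θ) ⬝ᵥ w k θ‖ ^ 2 else 0 : ℝ) : ℂ) := by
  have hU := transpose_of_conjTranspose_mul_self_eq_one (horth θ)
  rw [hΛ, ← transpose_of_mul_sldCoeff_mul_conjTranspose (fun k => p k θ) (fun k => deriv (p k) θ)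
      (fun k => w k θ) (fun k => deriv (w k) θ),
    sum_smul_vecMulVec_star (fun k => w k θ) (fun k => (p k θ : ℂ)),
    conj_mul_conj_of_conjTranspose_mul_self hU, conj_mul_conj_of_conjTranspose_mul_self hU,
    trace_conj_of_conjTranspose_mul_self hU,
    trace_diagonal_mul_sldCoeff_mul_sldCoeff _ _ _ fun k => hpnonneg k θ]

/-- With `Λ` the particular SLD solution, `tr{ρΛ²}` equals
`Σ_{k:p_k>0} (p_k')²/p_k + Σ_{j<k:p_j+p_k>0} 4(p_j−p_k)²/(p_j+p_k) |⟨w_j'|w_k⟩|²`. -/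
theorem stmt10 {d : ℕ} (p : Fin d → ℝ → ℝ) (w : Fin d → ℝ → Fin d → ℂ)
    (hpdiff : ∀ j, Differentiable ℝ (p j))
    (hwdiff : ∀ j, Differentiable ℝ (w j))
    (hpnonneg : ∀ j θ, 0 ≤ p j θ)
    (hpsum : ∀ θ : ℝ, ∑ j, p j θ = 1)
    (horth : ∀ θ : ℝ, ∀ j k : Fin d,
      star (w j θ) ⬝ᵥ w k θ = if j = k then 1 else 0)
    (θ : ℝ)
    (Λ : Matrix (Fin d) (Fin d) ℂ)
    (hΛ : Λ = (∑ k, if p k θ ≠ 0 then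
            ((deriv (p k) θ / p k θ : ℝ) : ℂ) • vecMulVec (w k θ) (star (w k θ)) else 0)
        + ∑ j, ∑ k, if j < k ∧ 0 < p j θ + p k θ then
            ((2 * (p j θ - p k θ) / (p j θ + p k θ) : ℝ) : ℂ) •
              ((star (deriv (w j) θ) ⬝ᵥ w k θ) • vecMulVec (w j θ) (star (w k θ))
                + (star (w k θ) ⬝ᵥ deriv (w j) θ) • vecMulVec (w k θ) (star (w j θ)))
          else 0) :
    ((∑ j, ((p j θ : ℂ) • vecMulVec (w j θ) (star (w j θ)))) * Λ * Λ).trace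
      = (((∑ k, if 0 < p k θ then (deriv (p k) θ) ^ 2 / p k θ else 0)
          + ∑ j, ∑ k, if j < k ∧ 0 < p j θ + p k θ then
              4 * (p j θ - p k θ) ^ 2 / (p j θ + p k θ)
                * ‖star (deriv (w j) θ) ⬝ᵥ w k θ‖ ^ 2 else 0 : ℝ) : ℂ) :=
  stmt10_general p w hpnonneg horth θ Λ hΛ
end
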